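/- arXiv:0808.2303 — 7 statements merged into one kernel-verified Lean document; each statement's English description precedes it below -/
import Mathlib

section
/- For an (n+p)×(n+p) invertible matrix A, the determinant of the top-left n×n block of A times det(A⁻¹) equals the determinant of the bottom-right p×p block of A⁻¹; i.e. det(A⁻¹)·det((A_{ij})_{1≤i,j≤n}) = det(((A⁻¹)_{kl})_{n<k,l≤n+p}). -/
/-!
Replace the last `p` columns of the identity matrix by those of `A⁻¹`. The result is block upper
triangular with determinant `det (A⁻¹)₂₂`, and multiplying it on the left by `A` gives a block
lower triangular matrix with diagonal blocks `A₁₁` and `1`. Taking determinants,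
`det A * det (A⁻¹)₂₂ = det A₁₁`; now multiply by `det A⁻¹ = (det A)⁻¹`.
-/

namespace Matrix

variable {m n R : Type*} [Fintype m] [Fintype n] [DecidableEq m] [DecidableEq n] [CommRing R]

theorem mul_fromBlocks_one_toBlocks_inv (A : Matrix (m ⊕ n) (m ⊕ n) R) (hA : IsUnit A.det) :
    A * fromBlocks 1 A⁻¹.toBlocks₁₂ 0 A⁻¹.toBlocks₂₂ =
      fromBlocks A.toBlocks₁₁ 0 A.toBlocks₂₁ 1 := by
  have hinv : fromBlocks A.toBlocks₁₁ A.toBlocks₁₂ A.toBlocks₂₁ A.toBlocks₂₂ *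
      fromBlocks A⁻¹.toBlocks₁₁ A⁻¹.toBlocks₁₂ A⁻¹.toBlocks₂₁ A⁻¹.toBlocks₂₂ =
        fromBlocks 1 0 0 1 := by
    rw [fromBlocks_toBlocks, fromBlocks_toBlocks, fromBlocks_one, mul_nonsing_inv A hA]
  rw [fromBlocks_multiply, fromBlocks_inj] at hinv
  nth_rewrite 1 [← fromBlocks_toBlocks A]
  rw [fromBlocks_multiply]
  simp only [Matrix.mul_one, Matrix.mul_zero, add_zero, hinv.2.1, hinv.2.2.2]

theorem det_nonsing_inv_mul_det_toBlocks₁₁ (A : Matrix (m ⊕ n) (m ⊕ n) R) (hA : IsUnit A.det) :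
    A⁻¹.det * A.toBlocks₁₁.det = A⁻¹.toBlocks₂₂.det := by
  have h := congrArg det (mul_fromBlocks_one_toBlocks_inv A hA)
  rw [det_mul, det_fromBlocks_zero₂₁, det_fromBlocks_zero₁₂, det_one, det_one, one_mul,
    mul_one] at h
  rw [← h, ← mul_assoc, det_nonsing_inv_mul_det A hA, one_mul]

end Matrix

/-- Jacobi's identity: for an invertible `(n+p) × (n+p)` matrix `A`, the determinant of the
top-left `n × n` block of `A` times `det (A⁻¹)` equals the determinant of the bottom-right
`p × p` block of `A⁻¹`. -/
theorem jacobi_identity (n p : ℕ) (A : Matrix (Fin n ⊕ Fin p) (Fin n ⊕ Fin p) ℝ)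
    (hA : IsUnit A.det) :
    A⁻¹.det * (A.submatrix Sum.inl Sum.inl).det
      = (A⁻¹.submatrix Sum.inr Sum.inr).det :=
  A.det_nonsing_inv_mul_det_toBlocks₁₁ hA
end

section
/- Let T be an infinite tree in which each vertex x has finite degree d_x, fix 0 < u < inf_x 1/(d_x − 1), set λ_x = (d_x − 1)u + 1/u and C_{xy} = 1 for edges {x,y}. Then the matrix Ĝ with entries Ĝ^{x,y} = u^{d(x,y)}·u/(1−u²) satisfies (M_λ − A)Ĝ = I, where A is the adjacency matrix and d is the graph distance. -/
/-!
In a tree, every neighbour of `z` is at distance `d(z, y) ± 1` from `y`, and when `z ≠ y` exactly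
one neighbour (the next vertex on the path to `y`) is closer. Hence
`λ_z u^{d(z,y)} - ∑_{x ~ z} u^{d(x,y)}` vanishes off the diagonal and equals `1/u - u` on it.
Since an infinite connected graph has a vertex of degree at least two, the hypothesis on `u`
forces `u < 1`, so multiplying by `u / (1 - u²)` normalises the diagonal to `1`.
-/

open Finset

namespace SimpleGraph

variable {V : Type*} {G : SimpleGraph V}

lemma Connected.exists_two_le_degree [Infinite V] [∀ v, Fintype (G.neighborSet v)]
    (hG : G.Connected) : ∃ a, 2 ≤ G.degree a := by
  classical
  obtain ⟨z⟩ := hG.nonempty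
  obtain ⟨v, hv⟩ := Infinite.exists_notMem_finset (insert z (G.neighborFinset z))
  rw [mem_insert, mem_neighborFinset, not_or] at hv
  obtain ⟨p, hp⟩ := hG.exists_walk_length_eq_dist z v
  obtain ⟨x, a, b, hxa, hab, -, hxb⟩ :=
    p.exists_adj_adj_not_adj_ne hp (hG.one_lt_dist_of_ne_of_not_adj (Ne.symm hv.1) hv.2)
  refine ⟨a, ?_⟩
  calc 2 = #{x, b} := (card_pair hxb).symm
    _ ≤ #(G.neighborFinset a) := card_le_card <| by
      simp [insert_subset_iff, hxa.symm, hab]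
    _ = G.degree a := card_neighborFinset_eq_degree G a

lemma Reachable.exists_adj_dist_add_one_eq {y z : V} (h : G.Reachable z y) (hne : z ≠ y) :
    ∃ w, G.Adj z w ∧ G.dist w y + 1 = G.dist z y := by
  obtain ⟨p, hp⟩ := h.exists_walk_length_eq_dist
  cases p with
  | nil => exact absurd rfl hne
  | @cons _ w _ hadj q =>
    obtain ⟨q', hq'⟩ := (hadj.symm.reachable.trans h).exists_walk_length_eq_dist
    refine ⟨w, hadj, le_antisymm ?_ ?_⟩
    · rw [← hp, Walk.length_cons]
      exact Nat.add_le_add_right (dist_le q) 1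
    · rw [← hq', ← Walk.length_cons hadj]
      exact dist_le _

lemma IsAcyclic.eq_of_adj_of_dist_add_one_eq (hG : G.IsAcyclic) {x₁ x₂ y z : V}
    (h₁ : G.Adj z x₁) (h₂ : G.Adj z x₂) (hd₁ : G.dist x₁ y + 1 = G.dist z y)
    (hd₂ : G.dist x₂ y + 1 = G.dist z y) : x₁ = x₂ := by
  have hzy : G.Reachable z y := Reachable.of_dist_ne_zero (by omega)
  obtain ⟨q₁, hq₁⟩ := (h₁.symm.reachable.trans hzy).exists_walk_length_eq_dist
  obtain ⟨q₂, hq₂⟩ := (h₂.symm.reachable.trans hzy).exists_walk_length_eq_dist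
  have hp₁ : (Walk.cons h₁ q₁).IsPath := Walk.isPath_of_length_eq_dist _ (by simp [hq₁, hd₁])
  have hp₂ : (Walk.cons h₂ q₂).IsPath := Walk.isPath_of_length_eq_dist _ (by simp [hq₂, hd₂])
  have := Subtype.mk.inj <| (hG.subsingleton_path z y).elim ⟨_, hp₁⟩ ⟨_, hp₂⟩
  exact (Walk.cons.inj this).1

section NeighborSums

variable [∀ v, Fintype (G.neighborSet v)] {M : Type*} [AddCommMonoid M]

lemma sum_neighborFinset_dist_self (f : ℕ → M) (z : V) :
    ∑ x ∈ G.neighborFinset z, f (G.dist x z) = G.degree z • f 1 := by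
  rw [sum_congr rfl fun x hx ↦ by
      rw [dist_eq_one_iff_adj.2 ((mem_neighborFinset G z x).1 hx).symm],
    sum_const, card_neighborFinset_eq_degree]

/- Exactly one neighbour of `z` is closer to `y`, the other `degree z - 1` are farther; the extra
`f (dist z y + 1)` on the left avoids writing `degree z - 1` in `ℕ`. -/
lemma IsTree.sum_neighborFinset_dist_add (hG : G.IsTree) (f : ℕ → M) {y z : V} (hne : z ≠ y) :
    ∑ x ∈ G.neighborFinset z, f (G.dist x y) + f (G.dist z y + 1)
      = f (G.dist z y - 1) + G.degree z • f (G.dist z y + 1) := by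
  classical
  obtain ⟨w, hw, hwd⟩ := (hG.connected z y).exists_adj_dist_add_one_eq hne
  have hw' : w ∈ G.neighborFinset z := (mem_neighborFinset G z w).2 hw
  have hfar : ∀ x ∈ (G.neighborFinset z).erase w, G.dist x y = G.dist z y + 1 := by
    intro x hx
    obtain ⟨hxw, hx⟩ := mem_erase.1 hx
    have hadj := (mem_neighborFinset G z x).1 hx
    rcases hG.dist_eq_dist_add_one_of_adj y hadj with h | h
    · exact absurd (hG.isAcyclic.eq_of_adj_of_dist_add_one_eq hadj hw
        (by rw [dist_comm, ← h, dist_comm]) hwd) hxw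
    · rwa [dist_comm, dist_comm (u := z)]
  rw [← add_sum_erase _ _ hw', sum_congr rfl fun x hx ↦ by rw [hfar x hx], sum_const,
    card_erase_of_mem hw', card_neighborFinset_eq_degree,
    show G.dist w y = G.dist z y - 1 by omega, add_assoc, ← succ_nsmul, Nat.sub_add_cancel]
  exact card_pos.2 ⟨w, hw'⟩ |>.trans_eq (card_neighborFinset_eq_degree G z)

end NeighborSums

lemma IsTree.mul_pow_dist_sub_sum_pow_dist [∀ v, Fintype (G.neighborSet v)] [DecidableEq V]
    (hG : G.IsTree) {u : ℝ} (hu : u ≠ 0) (y z : V) :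
    (((G.degree z : ℝ) - 1) * u + 1 / u) * u ^ G.dist z y
      - ∑ x ∈ G.neighborFinset z, u ^ G.dist x y = if z = y then 1 / u - u else 0 := by
  split_ifs with hzy
  · subst hzy
    rw [sum_neighborFinset_dist_self (u ^ ·), dist_self, nsmul_eq_mul]
    ring
  · have hsum := hG.sum_neighborFinset_dist_add (u ^ ·) hzy
    have hd : u ^ G.dist z y = u * u ^ (G.dist z y - 1) := by
      rw [← pow_succ', Nat.sub_add_cancel ((hG.connected z y).pos_dist_of_ne hzy)]
    simp only [nsmul_eq_mul, pow_succ, hd] at hsum ⊢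
    linear_combination -hsum + u ^ (G.dist z y - 1) * one_div_mul_cancel hu

end SimpleGraph

theorem green_tree_general (V : Type*) [Infinite V] [DecidableEq V] (G : SimpleGraph V)
    [∀ v, Fintype (G.neighborSet v)]
    (hT : G.IsTree) (u : ℝ) (hu : 0 < u)
    (hdeg : ∀ x : V, u * ((G.degree x : ℝ) - 1) < 1) (z y : V) :
    (((G.degree z : ℝ) - 1) * u + 1 / u) * (u ^ (G.dist z y) * (u / (1 - u ^ 2)))
      - ∑ x ∈ G.neighborFinset z, u ^ (G.dist x y) * (u / (1 - u ^ 2))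
      = if z = y then 1 else 0 := by
  obtain ⟨w, hw⟩ := hT.connected.exists_two_le_degree
  have hu1 : u < 1 := by
    have : (2 : ℝ) ≤ G.degree w := by exact_mod_cast hw
    nlinarith [hdeg w]
  have hu2 : 1 - u ^ 2 ≠ 0 := by nlinarith
  calc _ = ((((G.degree z : ℝ) - 1) * u + 1 / u) * u ^ G.dist z y
          - ∑ x ∈ G.neighborFinset z, u ^ G.dist x y) * (u / (1 - u ^ 2)) := by
        rw [← sum_mul]; ring
    _ = (if z = y then 1 / u - u else 0) * (u / (1 - u ^ 2)) := by
        rw [hT.mul_pow_dist_sub_sum_pow_dist hu.ne' y z]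
    _ = if z = y then 1 else 0 := by
        split_ifs
        · field_simp
        · exact zero_mul _

/-- Green function on an infinite locally finite tree: with `λ_x = (d_x - 1) u + 1/u` for
`0 < u < inf_x 1/(d_x - 1)`, unit conductances on edges, the matrix
`Ĝ^{x,y} = u^{d(x,y)} · u/(1-u²)` satisfies `(M_λ - A) Ĝ = I`, stated entrywise. -/
theorem green_tree (V : Type*) [Infinite V] [DecidableEq V] (G : SimpleGraph V)
    [DecidableRel G.Adj] [∀ v, Fintype (G.neighborSet v)]
    (hT : G.IsTree) (u : ℝ) (hu : 0 < u)
    (hdeg : ∀ x : V, u * ((G.degree x : ℝ) - 1) < 1) (z y : V) :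
    (((G.degree z : ℝ) - 1) * u + 1 / u) * (u ^ (G.dist z y) * (u / (1 - u ^ 2)))
      - ∑ x ∈ G.neighborFinset z, u ^ (G.dist x y) * (u / (1 - u ^ 2))
      = if z = y then 1 else 0 :=
  green_tree_general V G hT u hu hdeg z y
end

section
/- Let P be a substochastic matrix with spectral radius < 1 and G = (I−P)⁻¹ M_λ⁻¹ the associated Green function (G = (M_λ − C)⁻¹ with C_{xy} = λ_x P^x_y). For fixed x ≠ y, differentiating s ↦ −log det(I − P^{(s)}) at s = 1, where P^{(s)} agrees with P except that the (x,y) entry is multiplied by s, gives the expected number of traversals μ(N_{x,y}) = G^{x,y} C_{x,y}. -/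
/-!
Perturbing the `(x, y)` entry of `P` is a rank-one change of the single row `x` of `I - P`, so by
multilinearity `det (I - P^{(s)}) = det (I - P) - (s - 1) P^x_y adj(I - P)^y_x` is affine in `s`,
and the logarithmic derivative at `s = 1` is `P^x_y [(I - P)⁻¹]^y_x`. Since `M_λ - C = M_λ (I - P)`
and `G = (M_λ - C)⁻¹` is symmetric, this is `G^{x,y} C_{x,y}`.
-/

open Matrix

namespace Matrix

variable {n : Type*} [Fintype n] [DecidableEq n]

theorem det_one_sub_ne_zero_of_one_notMem_spectrum {K L : Type*} [Field K] [Field L]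
    [Algebra K L] {A : Matrix n n K} (h : (1 : L) ∉ spectrum L (A.map (algebraMap K L))) :
    (1 - A).det ≠ 0 := by
  contrapose! h
  rw [mem_spectrum_iff_isRoot_charpoly, charpoly_map, Polynomial.IsRoot, Polynomial.eval_map,
    Polynomial.eval₂_at_one, eval_charpoly, scalar_apply, diagonal_one, h, map_zero]

omit [Fintype n] in
theorem add_single_eq_updateRow {R : Type*} [CommRing R] (A : Matrix n n R) (i j : n) (c : R) :
    A + single i j c = A.updateRow i (A i + c • Pi.single j 1) := by
  ext k l
  by_cases hk : k = i
  · subst hk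
    rcases eq_or_ne l j with rfl | hl
    · simp
    · simp [hl, hl.symm]
  · simp [hk, Ne.symm hk]

theorem det_add_single {R : Type*} [CommRing R] (A : Matrix n n R) (i j : n) (c : R) :
    (A + single i j c).det = A.det + c * A.adjugate j i := by
  rw [add_single_eq_updateRow, det_updateRow_add, det_updateRow_smul, updateRow_eq_self,
    adjugate_apply]

theorem hasDerivAt_log_det_add_single {A : Matrix n n ℝ} (hA : A.det ≠ 0) (i j : n) (c : ℝ) :
    HasDerivAt (fun t : ℝ => Real.log (A + single i j (t * c)).det) (c * A⁻¹ j i) 0 := by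
  simp_rw [det_add_single]
  have hdet_deriv :
      HasDerivAt (fun t : ℝ => A.det + t * c * A.adjugate j i) (c * A.adjugate j i) 0 := by
    simpa using (((hasDerivAt_id (0 : ℝ)).mul_const c).mul_const (A.adjugate j i)).const_add A.det
  convert hdet_deriv.log (by simpa using hA) using 1
  rw [inv_def, Matrix.smul_apply, Ring.inverse_eq_inv', smul_eq_mul]
  ring

theorem diagonal_sub_eq_diagonal_mul_one_sub {lam : n → ℝ} (hlam : ∀ i, lam i ≠ 0)
    {C P : Matrix n n ℝ} (hP : ∀ i j, P i j = C i j / lam i) :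
    diagonal lam - C = diagonal lam * (1 - P) := by
  ext i j
  simp [mul_sub, hP, mul_div_cancel₀ _ (hlam i), diagonal_apply, one_apply]

theorem inv_diagonal_sub_apply_mul {lam : n → ℝ} (hlam : ∀ i, lam i ≠ 0)
    {C P : Matrix n n ℝ} (hC : C.IsSymm) (hP : ∀ i j, P i j = C i j / lam i) (i j : n) :
    (diagonal lam - C)⁻¹ i j * C i j = P i j * (1 - P)⁻¹ j i := by
  have hD : IsUnit (diagonal lam).det := by
    simpa [det_diagonal, Finset.prod_ne_zero_iff] using hlam
  have hGD : (diagonal lam - C)⁻¹ * diagonal lam = (1 - P)⁻¹ := by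
    rw [diagonal_sub_eq_diagonal_mul_one_sub hlam hP, mul_inv_rev, Matrix.mul_assoc,
      nonsing_inv_mul _ hD, Matrix.mul_one]
  have hG : (diagonal lam - C)⁻¹.IsSymm := (isSymm_diagonal lam |>.sub hC).inv
  rw [← hGD, mul_diagonal, ← hG.apply i j, hP, mul_left_comm, div_mul_cancel₀ _ (hlam i)]

end Matrix

theorem deriv_logdet_traversal_general (n : ℕ) (lam : Fin n → ℝ) (hlam : ∀ i, 0 < lam i)
    (C : Matrix (Fin n) (Fin n) ℝ) (hsym : ∀ i j, C i j = C j i)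
    (P : Matrix (Fin n) (Fin n) ℝ) (hP : ∀ i j, P i j = C i j / lam i)
    (hspec : ∀ z ∈ spectrum ℂ (P.map (algebraMap ℝ ℂ)), ‖z‖ < 1)
    (x y : Fin n) :
    HasDerivAt
      (fun s : ℝ =>
        - Real.log ((1 - (P + (s - 1) • Matrix.single x y (P x y))).det))
      ((Matrix.diagonal lam - C)⁻¹ x y * C x y) 1 := by
  have hdet : (1 - P).det ≠ 0 :=
    det_one_sub_ne_zero_of_one_notMem_spectrum fun h1 => by simpa using hspec 1 h1
  have hperturb : ∀ s : ℝ,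
      1 - (P + (s - 1) • single x y (P x y)) = (1 - P) + single x y ((1 - s) * P x y) := by
    intro s
    rw [smul_single, smul_eq_mul, sub_add_eq_sub_sub, sub_eq_add_neg _ (single _ _ _),
      single_neg, ← neg_mul, neg_sub]
  have hlog := (HasDerivAt.comp_const_sub (1 : ℝ) 1
    (by rw [sub_self]; exact hasDerivAt_log_det_add_single hdet x y (P x y))).neg
  simp_rw [hperturb]
  rw [inv_diagonal_sub_apply_mul (fun i => (hlam i).ne') (IsSymm.ext fun i j => hsym j i) hP,
    ← neg_neg (P x y * _)]
  exact hlog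

/-- Differentiating `s ↦ - log det (I - P^{(s)})` at `s = 1`, where `P^{(s)}` multiplies the
`(x,y)` entry of `P` by `s`, gives the expected traversal number
`μ(N_{x,y}) = G^{x,y} C_{x,y}`, with `G = (M_λ - C)⁻¹` and `P^x_y = C_{x,y}/λ_x`. -/
theorem deriv_logdet_traversal (n : ℕ) (lam : Fin n → ℝ) (hlam : ∀ i, 0 < lam i)
    (C : Matrix (Fin n) (Fin n) ℝ) (hsym : ∀ i j, C i j = C j i)
    (hnn : ∀ i j, 0 ≤ C i j)
    (hsub : ∀ i, ∑ j, C i j ≤ lam i)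
    (P : Matrix (Fin n) (Fin n) ℝ) (hP : ∀ i j, P i j = C i j / lam i)
    (hspec : ∀ z ∈ spectrum ℂ (P.map (algebraMap ℝ ℂ)), ‖z‖ < 1)
    (x y : Fin n) (hxy : x ≠ y) :
    HasDerivAt
      (fun s : ℝ =>
        - Real.log ((1 - (P + (s - 1) • Matrix.single x y (P x y))).det))
      ((Matrix.diagonal lam - C)⁻¹ x y * C x y) 1 :=
  deriv_logdet_traversal_general n lam hlam C hsym P hP hspec x y
end

section
/- If M(s) is a differentiable invertible-matrix-valued function with M''(s) = 0 (i.e. M is affine in s), then the n-th derivative of log det M(s) equals (−1)^{n−1}(n−1)!·Tr((M'(s)M(s)⁻¹)^n). -/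
/-!
Along the line `M(t) = A + t • B`, Jacobi's formula reduces to
`det (1 + t • N) = 1 + t tr N + O(t²)`, so `(log det M)' = tr X` with `X = B M⁻¹`. Since `M' = B`
is constant, `(M⁻¹)' = -M⁻¹ B M⁻¹` gives `X' = -X²`, hence by cyclicity of the trace
`(tr Xⁿ)' = -n tr Xⁿ⁺¹`, and induction on the order of the derivative produces `(-1)ⁿ⁻¹ (n-1)!`.
-/

open Matrix Polynomial

section

/- The operator norm only serves to make matrices a complete normed algebra inside the proofs;
the statements refer to the product topology of `Matrix`. -/
attribute [local instance] Matrix.linftyOpNormedAddCommGroup Matrix.linftyOpNormedSpace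
  Matrix.linftyOpNormedRing Matrix.linftyOpNormedAlgebra

variable {𝕜 : Type*} [NontriviallyNormedField 𝕜] {ι : Type*} [Fintype ι]

theorem HasDerivAt.matrix_trace [CompleteSpace 𝕜] {F : 𝕜 → Matrix ι ι 𝕜} {F' : Matrix ι ι 𝕜}
    {s : 𝕜} (hF : HasDerivAt F F' s) : HasDerivAt (fun t => trace (F t)) (trace F') s :=
  (traceLinearMap ι 𝕜 𝕜).toContinuousLinearMap.hasFDerivAt.comp_hasDerivAt s hF

variable [DecidableEq ι]

theorem hasDerivAt_det_one_add_smul (N : Matrix ι ι 𝕜) :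
    HasDerivAt (fun t : 𝕜 => det (1 + t • N)) (trace N) 0 := by
  have hp := (det (1 + (X : 𝕜[X]) • N.map C)).hasDerivAt 0
  rw [derivative_det_one_add_X_smul] at hp
  refine hp.congr_of_eventuallyEq (Filter.Eventually.of_forall fun t => ?_)
  simp only [← coe_evalRingHom, RingHom.map_det]
  congr 1
  ext i j
  by_cases hij : i = j <;> simp [one_apply, hij, mul_comm t]

theorem hasDerivAt_det_add_smul {A B : Matrix ι ι 𝕜} {s : 𝕜} (hdet : IsUnit (A + s • B).det) :
    HasDerivAt (fun t => det (A + t • B)) (det (A + s • B) * trace (B * (A + s • B)⁻¹)) s := by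
  set M := A + s • B with hM
  have hfactor : ∀ t, A + t • B = M * (1 + (t - s) • (M⁻¹ * B)) := fun t => by
    rw [mul_add, mul_one, Matrix.mul_smul, ← mul_assoc, mul_nonsing_inv _ hdet, one_mul, sub_smul,
      hM]
    abel
  have hone : HasDerivAt (fun t => det (1 + t • (M⁻¹ * B))) (trace (M⁻¹ * B)) (s - s) := by
    rw [sub_self]
    exact hasDerivAt_det_one_add_smul _
  have h := (hone.comp_sub_const s s).const_mul M.det
  rw [trace_mul_comm] at h
  simpa only [hfactor, det_mul] using h

theorem HasDerivAt.matrix_inv [CompleteSpace 𝕜] {M : 𝕜 → Matrix ι ι 𝕜} {M' : Matrix ι ι 𝕜}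
    {s : 𝕜} (hM : HasDerivAt M M' s) (hdet : IsUnit (M s).det) :
    HasDerivAt (fun t => (M t)⁻¹) (-((M s)⁻¹ * M' * (M s)⁻¹)) s := by
  -- instance search does not see that the operator norm is complete
  have : HasSummableGeomSeries (Matrix ι ι 𝕜) :=
    @instHasSummableGeomSeriesOfCompleteSpace _ _ (FiniteDimensional.complete 𝕜 _)
  obtain ⟨u, hu⟩ := (isUnit_iff_isUnit_det _).mpr hdet
  have hinv := hasFDerivAt_ringInverse (𝕜 := 𝕜) u
  rw [hu] at hinv
  have h := hinv.comp_hasDerivAt s hM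
  rw [coe_units_inv, hu] at h
  simp only [Function.comp_def, ← nonsing_inv_eq_ringInverse, _root_.neg_apply,
    ContinuousLinearMap.mulLeftRight_apply] at h
  exact h

theorem HasDerivAt.matrix_trace_pow [CompleteSpace 𝕜] {F : 𝕜 → Matrix ι ι 𝕜}
    {F' : Matrix ι ι 𝕜} {s : 𝕜} (hF : HasDerivAt F F' s) (n : ℕ) :
    HasDerivAt (fun t => trace (F t ^ n)) (n * trace (F s ^ (n - 1) * F')) s := by
  refine (hF.fun_pow' n).matrix_trace.congr_deriv ?_
  have hcyclic : ∀ i ∈ Finset.range n,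
      trace (F s ^ (n.pred - i) * F' * F s ^ i) = trace (F s ^ (n - 1) * F') := fun i hi => by
    have hexp : i + (n.pred - i) = n - 1 := by
      have := Finset.mem_range.mp hi
      rw [Nat.pred_eq_sub_one]
      omega
    rw [trace_mul_comm, ← mul_assoc, ← pow_add, hexp]
  rw [trace_sum, Finset.sum_congr rfl hcyclic, Finset.sum_const, Finset.card_range, nsmul_eq_mul]

variable [CompleteSpace 𝕜] {A B : Matrix ι ι 𝕜} {s : 𝕜}

theorem hasDerivAt_mul_inv_add_smul (hdet : IsUnit (A + s • B).det) :
    HasDerivAt (fun t => B * (A + t • B)⁻¹) (-(B * (A + s • B)⁻¹) ^ 2) s := by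
  have hline : HasDerivAt (fun t : 𝕜 => A + t • B) B s :=
    (((hasDerivAt_id s).smul_const B).const_add A).congr_deriv (one_smul 𝕜 B)
  refine ((hline.matrix_inv hdet).const_mul B).congr_deriv ?_
  simp only [mul_neg, sq, mul_assoc]

theorem hasDerivAt_trace_pow_mul_inv_add_smul (hdet : IsUnit (A + s • B).det) (n : ℕ) :
    HasDerivAt (fun t => trace ((B * (A + t • B)⁻¹) ^ n))
      (-(n * trace ((B * (A + s • B)⁻¹) ^ (n + 1)))) s := by
  refine ((hasDerivAt_mul_inv_add_smul hdet).matrix_trace_pow n).congr_deriv ?_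
  rcases n with _ | n
  · simp
  · rw [mul_neg, trace_neg, ← pow_add, mul_neg, Nat.add_sub_cancel]

end

theorem hasDerivAt_log_det_add_smul {ι : Type*} [Fintype ι] [DecidableEq ι]
    {A B : Matrix ι ι ℝ} {s : ℝ} (hdet : IsUnit (A + s • B).det) :
    HasDerivAt (fun t => Real.log (det (A + t • B))) (trace (B * (A + s • B)⁻¹)) s :=
  ((hasDerivAt_det_add_smul hdet).log hdet.ne_zero).congr_deriv
    (mul_div_cancel_left₀ _ hdet.ne_zero)

/-- If `M(s) = A + s B` is an affine invertible-matrix-valued function (so `M'' = 0`), then the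
`n`-th derivative of `log det M(s)` equals `(-1)^{n-1} (n-1)! Tr((M'(s) M(s)⁻¹)^n)`. -/
theorem iteratedDeriv_logdet_affine (m : ℕ) (A B : Matrix (Fin m) (Fin m) ℝ)
    (h : ∀ t : ℝ, IsUnit (A + t • B).det) (n : ℕ) (hn : 1 ≤ n) (s : ℝ) :
    iteratedDeriv n (fun t : ℝ => Real.log ((A + t • B).det)) s
      = (-1 : ℝ) ^ (n - 1) * (n - 1).factorial *
        Matrix.trace ((B * (A + s • B)⁻¹) ^ n) := by
  induction n, hn using Nat.le_induction generalizing s with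
  | base =>
    rw [iteratedDeriv_one, (hasDerivAt_log_det_add_smul (h s)).deriv]
    simp
  | succ n hn ih =>
    rw [iteratedDeriv_succ, funext ih,
      ((hasDerivAt_trace_pow_mul_inv_add_smul (h s) n).const_mul _).deriv]
    obtain ⟨k, rfl⟩ := Nat.exists_eq_add_of_le' hn
    simp only [Nat.add_sub_cancel, Nat.factorial_succ]
    push_cast
    ring
end

section
/- If X = X₁ ∪ X₂ is a partition and G is the Green matrix (M_λ − C)⁻¹ of a transient symmetric chain, with G^{X_i} the Green matrix of the chain killed outside X_i, then log(det(G)/(det(G^{X₁})det(G^{X₂}))) = Σ_{k≥1} (1/(2k)) Tr([H₁₂H₂₁]^k + [H₂₁H₁₂]^k), where H₁₂ = H^{X₂}|_{X₁} and H₂₁ = H^{X₁}|_{X₂} are the hitting (balayage) kernels, which are strict contractions. -/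
/-!
Write `M = [[A, B], [Bᵀ, D]]`. By the Schur complement formula,
`det M / (det A * det D) = det (1 - S)` with `S = D⁻¹ Bᵀ A⁻¹ B = H₂₁ H₁₂`. Conjugating by
`R = √(D⁻¹)` turns `S` into the symmetric matrix `T = R Bᵀ A⁻¹ B R`, whose eigenvalues lie in
`[0, 1)`: the upper bound is positivity of the Schur complement `D - Bᵀ A⁻¹ B`. Diagonalizing `T`
reduces `-log det (1 - S) = ∑ tr (S ^ k) / k` to the scalar series of `-log (1 - x)`, and
`tr ((H₁₂ H₂₁) ^ k) = tr ((H₂₁ H₁₂) ^ k)` splits each term into the two halves of the statement.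
-/

open Matrix

namespace Matrix

variable {m n : Type*}

section TracePow

variable {R : Type*} [Fintype m] [Fintype n]

theorem mul_pow_succ_eq_mul_mul_pow_mul [Semiring R] [DecidableEq m] [DecidableEq n]
    (X : Matrix m n R) (Y : Matrix n m R) (k : ℕ) :
    (X * Y) ^ (k + 1) = X * ((Y * X) ^ k * Y) := by
  induction k with
  | zero => simp
  | succ k ih => rw [pow_succ, ih, pow_succ]; simp only [Matrix.mul_assoc]

theorem trace_pow_succ_mul_comm [CommSemiring R] [DecidableEq m] [DecidableEq n]
    (X : Matrix m n R) (Y : Matrix n m R) (k : ℕ) :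
    ((X * Y) ^ (k + 1)).trace = ((Y * X) ^ (k + 1)).trace := by
  rw [mul_pow_succ_eq_mul_mul_pow_mul, trace_mul_comm, pow_succ, Matrix.mul_assoc]

end TracePow

section LogDet

variable [Fintype n] [DecidableEq n]

theorem IsHermitian.hasSum_trace_pow_div_log_of_abs_eigenvalues_lt_one {T : Matrix n n ℝ}
    (hT : T.IsHermitian) (hμ : ∀ i, |hT.eigenvalues i| < 1) :
    HasSum (fun k : ℕ => (T ^ (k + 1)).trace / (k + 1)) (-Real.log (1 - T).det) := by
  set μ := hT.eigenvalues
  set U := hT.eigenvectorUnitary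
  set φ := Unitary.conjStarAlgAut ℝ (Matrix n n ℝ) U
  have hT_eq : T = φ (diagonal μ) := by
    simpa [-Unitary.conjStarAlgAut_apply] using hT.spectral_theorem
  have htrace (X : Matrix n n ℝ) : (φ X).trace = X.trace := by
    rw [Unitary.conjStarAlgAut_apply, trace_mul_cycle, Unitary.coe_star_mul_self, Matrix.one_mul]
  have hdet (X : Matrix n n ℝ) : (φ X).det = X.det :=
    det_conj_of_mul_eq_one (Unitary.coe_mul_star_self U) (Unitary.coe_star_mul_self U)
  have htrace_pow (k : ℕ) : (T ^ (k + 1)).trace = ∑ i, μ i ^ (k + 1) := by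
    rw [hT_eq, ← map_pow, htrace, diagonal_pow, trace_diagonal, Pi.pow_def]
  have hdet_one_sub : (1 - T).det = ∏ i, (1 - μ i) := by
    rw [hT_eq, ← map_one φ, ← map_sub, hdet, ← diagonal_one, diagonal_sub, det_diagonal]
  have hpos (i : n) : 0 < 1 - μ i := by linarith [(abs_lt.mp (hμ i)).2]
  rw [hdet_one_sub, Real.log_prod fun i _ => (hpos i).ne', ← Finset.sum_neg_distrib]
  simp only [htrace_pow, Finset.sum_div]
  exact hasSum_sum fun i _ => Real.hasSum_pow_div_log_of_abs_lt_one (hμ i)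

theorem PosSemidef.abs_eigenvalues_lt_one {T : Matrix n n ℝ} (hT : T.PosSemidef)
    (h1T : (1 - T).PosDef) (i : n) : |hT.1.eigenvalues i| < 1 := by
  refine abs_lt.mpr ⟨by linarith [hT.eigenvalues_nonneg i], ?_⟩
  set v := ⇑(hT.1.eigenvectorBasis i)
  have hv : v ≠ 0 := by simpa [v] using hT.1.eigenvectorBasis.orthonormal.ne_zero i
  have hpos := h1T.dotProduct_mulVec_pos hv
  rw [sub_mulVec, one_mulVec, hT.1.mulVec_eigenvectorBasis, ← one_smul ℝ v, ← sub_smul,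
    one_smul, dotProduct_smul, smul_eq_mul] at hpos
  linarith [(pos_iff_pos_of_mul_pos hpos).mpr (dotProduct_star_self_pos_iff.mpr hv)]

open scoped MatrixOrder in
theorem PosDef.hasSum_trace_inv_mul_pow_div_log {D K : Matrix n n ℝ} (hD : D.PosDef)
    (hK : K.PosSemidef) (hDK : (D - K).PosDef) :
    HasSum (fun k : ℕ => ((D⁻¹ * K) ^ (k + 1)).trace / (k + 1))
      (-Real.log (1 - D⁻¹ * K).det) := by
  set R := CFC.sqrt D⁻¹
  have hR : R.IsHermitian := (nonneg_iff_posSemidef.mp (CFC.sqrt_nonneg D⁻¹)).1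
  have hRR : R * R = D⁻¹ := CFC.sqrt_mul_sqrt_self D⁻¹ hD.inv.posSemidef.nonneg
  have hRDR : R * (R * D) = 1 := by
    rw [← Matrix.mul_assoc, hRR, nonsing_inv_mul _ (isUnit_iff_isUnit_det _ |>.mp hD.isUnit)]
  have hT : (R * K * R).PosSemidef := by
    have := hK.conjTranspose_mul_mul_same R
    rwa [hR.eq] at this
  have h1T : (1 - R * K * R).PosDef := by
    have := hDK.conjTranspose_mul_mul_same <|
      mulVec_injective_of_isUnit (IsUnit.of_mul_eq_one _ hRDR)
    rwa [hR.eq, Matrix.mul_sub, Matrix.sub_mul, mul_eq_one_comm.mp hRDR] at this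
  have hDK_eq : D⁻¹ * K = R * (R * K) := by rw [← Matrix.mul_assoc, hRR]
  convert hT.1.hasSum_trace_pow_div_log_of_abs_eigenvalues_lt_one
    (hT.abs_eigenvalues_lt_one h1T) using 2 with k
  · rw [hDK_eq, trace_pow_succ_mul_comm]
  · rw [hDK_eq, det_one_sub_mul_comm]

end LogDet

section Blocks

theorem IsHermitian.toBlocks₂₁_eq {R : Type*} [InvolutiveStar R]
    {M : Matrix (m ⊕ n) (m ⊕ n) R} (hM : M.IsHermitian) : M.toBlocks₂₁ = M.toBlocks₁₂ᴴ := by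
  rw [← fromBlocks_toBlocks M, isHermitian_fromBlocks_iff] at hM
  simpa using hM.2.1.symm

variable [Fintype m] [Fintype n] [DecidableEq m] [DecidableEq n]

theorem det_one_sub_inv_mul_schur {K : Type*} [Field K] {A : Matrix m m K} {B : Matrix m n K}
    {C : Matrix n m K} {D : Matrix n n K} [Invertible A] (hD : IsUnit D.det) :
    (1 - D⁻¹ * (C * A⁻¹ * B)).det = (fromBlocks A B C D).det / (A.det * D.det) := by
  have : 1 - D⁻¹ * (C * A⁻¹ * B) = D⁻¹ * (D - C * A⁻¹ * B) := by
    rw [Matrix.mul_sub, nonsing_inv_mul _ hD]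
  rw [this, det_mul, det_nonsing_inv, det_fromBlocks₁₁, invOf_eq_nonsing_inv, Ring.inverse_eq_inv']
  field_simp [hD.ne_zero, (isUnit_det_of_invertible A).ne_zero]

open scoped ComplexOrder in
theorem PosDef.schur_complement₁₁ {𝕜 : Type*} [RCLike 𝕜] {A : Matrix m m 𝕜} {B : Matrix m n 𝕜}
    {D : Matrix n n 𝕜} (hM : (fromBlocks A B Bᴴ D).PosDef) : (D - Bᴴ * A⁻¹ * B).PosDef := by
  have hA : A.PosDef := hM.submatrix Sum.inl_injective
  let _ := hA.isUnit.invertible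
  refine ((PosDef.fromBlocks₁₁ B D hA).mp hM.posSemidef).posDef_iff_det_ne_zero.mpr fun h => ?_
  have := hM.det_pos
  rw [det_fromBlocks₁₁, invOf_eq_nonsing_inv, h, mul_zero] at this
  exact this.false

end Blocks

end Matrix

theorem loop_two_sets_general (α β : Type*) [Fintype α] [Fintype β] [DecidableEq α] [DecidableEq β]
    (lam : α ⊕ β → ℝ) (C : Matrix (α ⊕ β) (α ⊕ β) ℝ)
    (hPD : (Matrix.diagonal lam - C).PosDef) :
    let M := Matrix.diagonal lam - C
    let H12 := -((M.toBlocks₁₁)⁻¹ * M.toBlocks₁₂)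
    let H21 := -((M.toBlocks₂₂)⁻¹ * M.toBlocks₂₁)
    Real.log ((M⁻¹).det / (((M.toBlocks₁₁)⁻¹).det * ((M.toBlocks₂₂)⁻¹).det))
      = ∑' k : ℕ, (1 / (2 * ((k : ℝ) + 1))) *
          (Matrix.trace ((H12 * H21) ^ (k + 1)) + Matrix.trace ((H21 * H12) ^ (k + 1))) := by
  intro M H12 H21
  set A := M.toBlocks₁₁
  set B := M.toBlocks₁₂
  set D := M.toBlocks₂₂
  have hM : M.PosDef := hPD
  have hA : A.PosDef := hM.submatrix Sum.inl_injective
  have hD : D.PosDef := hM.submatrix Sum.inr_injective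
  let _ := hA.isUnit.invertible
  have hM_eq : M = fromBlocks A B Bᴴ D := by
    rw [← hM.1.toBlocks₂₁_eq, fromBlocks_toBlocks]
  have hK : (Bᴴ * A⁻¹ * B).PosSemidef := hA.inv.posSemidef.conjTranspose_mul_mul_same B
  have hSchur : (D - Bᴴ * A⁻¹ * B).PosDef := (hM_eq ▸ hM).schur_complement₁₁
  have hH : H21 * H12 = D⁻¹ * (Bᴴ * A⁻¹ * B) := by
    change -(D⁻¹ * M.toBlocks₂₁) * -(A⁻¹ * B) = _
    rw [hM.1.toBlocks₂₁_eq, Matrix.neg_mul, Matrix.mul_neg, neg_neg]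
    simp only [Matrix.mul_assoc]
    rfl
  have hdet : (M⁻¹).det / ((A⁻¹).det * (D⁻¹).det) = ((1 - D⁻¹ * (Bᴴ * A⁻¹ * B)).det)⁻¹ := by
    rw [det_one_sub_inv_mul_schur (isUnit_iff_isUnit_det _ |>.mp hD.isUnit), ← hM_eq,
      det_nonsing_inv, det_nonsing_inv, det_nonsing_inv, Ring.inverse_eq_inv', ← mul_inv,
      inv_div_inv, inv_div]
  rw [hdet, Real.log_inv, ← (hD.hasSum_trace_inv_mul_pow_div_log hK hSchur).tsum_eq]
  refine tsum_congr fun k => ?_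
  rw [trace_pow_succ_mul_comm H12 H21, hH]
  field_simp
  ring

/-- For a partition `X = X₁ ⊔ X₂` and `G = (M_λ - C)⁻¹` the Green matrix of a transient
symmetric chain, with `G^{X_i}` the Green matrix of the chain killed outside `X_i`, one has
`log (det G / (det G^{X₁} det G^{X₂})) = Σ_{k≥1} (1/2k)(Tr[(H₁₂H₂₁)^k] + Tr[(H₂₁H₁₂)^k])`,
where `H₁₂ = G^{X₁} C_{X₁×X₂}` and `H₂₁ = G^{X₂} C_{X₂×X₁}` are the hitting kernels. -/
theorem loop_two_sets (α β : Type*) [Fintype α] [Fintype β] [DecidableEq α] [DecidableEq β]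
    (lam : α ⊕ β → ℝ) (C : Matrix (α ⊕ β) (α ⊕ β) ℝ)
    (hsym : ∀ i j, C i j = C j i) (hnn : ∀ i j, 0 ≤ C i j) (hdiag : ∀ i, C i i = 0)
    (hPD : (Matrix.diagonal lam - C).PosDef) :
    let M := Matrix.diagonal lam - C
    let H12 := -((M.toBlocks₁₁)⁻¹ * M.toBlocks₁₂)
    let H21 := -((M.toBlocks₂₂)⁻¹ * M.toBlocks₂₁)
    Real.log ((M⁻¹).det / (((M.toBlocks₁₁)⁻¹).det * ((M.toBlocks₂₂)⁻¹).det))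
      = ∑' k : ℕ, (1 / (2 * ((k : ℝ) + 1))) *
          (Matrix.trace ((H12 * H21) ^ (k + 1)) + Matrix.trace ((H21 * H12) ^ (k + 1))) :=
  loop_two_sets_general α β lam C hPD
end

section
/- For a recurrent finite connected weighted graph with conductances C, the weighted matrix-tree normalization Z⁰_e = (Σ_{T spanning tree} Π_{{x,y}∈T} C_{x,y})⁻¹ equals |X|·det(G), where det(G) is the determinant of the recurrent Green operator restricted to the hyperplane of zero-mass measures, computed in any orthonormal basis of that hyperplane. -/
/-!
Write the weighted Laplacian as `B W Bᵀ`, where `B` is the signed vertex–edge incidence matrix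
and `W` the diagonal matrix of conductances. Remove the row and column of a root `r`. By
Cauchy–Binet, the determinant of the reduced Laplacian is the sum over sets `S` of `|X| - 1`
edges of `(∏_{e ∈ S} C_e) · det(B_S)²`, and `det(B_S)²` is `1` when `S` is a spanning tree (order
the vertices by their distance to `r`: the matrix becomes triangular with diagonal entries `±1`)
and `0` otherwise (the indicator of a component avoiding `r` is a left null vector).

The measures `δ_x - δ_r`, `x ≠ r`, form a basis of the zero-mass hyperplane. In this basis the
Green form is the inverse of the reduced Laplacian, and passing to an orthonormal basis multiplies
its determinant by the Gram determinant `det(⟨δ_y - δ_r, δ_x - δ_r⟩) = det(I + 𝟙𝟙ᵀ) = |X|`.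
-/

open scoped Classical RealInnerProductSpace

open Finset Matrix

namespace Matrix

theorem ext_of_mulVec_one_of_ne {R n : Type*} [Ring R] [Fintype n] [DecidableEq n]
    {M N : Matrix n n R} (h1 : M *ᵥ 1 = N *ᵥ 1) (hne : ∀ i j, i ≠ j → M i j = N i j) :
    M = N := by
  ext i j
  rcases eq_or_ne i j with rfl | hij
  · have hrow := congrFun h1 i
    simp only [mulVec, dotProduct, Pi.one_apply, mul_one] at hrow
    rw [← add_sum_erase _ _ (mem_univ i), ← add_sum_erase _ _ (mem_univ i),
      sum_congr rfl fun j hj => hne i j (ne_of_mem_erase hj).symm] at hrow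
    exact add_right_cancel hrow
  · exact hne i j hij

variable {R : Type*} [CommRing R]

theorem det_eq_prod_diag_of_lt {m α : Type*} [Fintype m] [DecidableEq m] [LinearOrder α]
    (M : Matrix m m R) (b : m → α) (hb : ∀ i j, i ≠ j → M i j ≠ 0 → b i < b j) :
    M.det = ∏ i, M i i := by
  -- `M` is upper triangular for `b` refined to a linear order by an enumeration of `m`
  let _ : LinearOrder m := LinearOrder.lift' (fun i => toLex (b i, Fintype.equivFin m i))
    fun i j h => (Fintype.equivFin m).injective (Prod.ext_iff.mp (toLex.injective h)).2
  refine det_of_isUpperTriangular fun i j hji => ?_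
  by_contra hM
  exact absurd hji (not_lt.mpr (Prod.Lex.le_iff.mpr (Or.inl (hb i j (ne_of_gt hji) hM))))

section CauchyBinet

variable {m k : Type*} [Fintype m] [DecidableEq m] [Fintype k]

theorem det_mul_eq_sum_prod_mul_det_submatrix (A : Matrix m k R) (B : Matrix k m R) :
    (A * B).det = ∑ f : m → k, (∏ i, B (f i) i) * (A.submatrix id f).det := by
  simp only [det_apply', mul_apply, prod_univ_sum, mul_sum, Fintype.piFinset_univ,
    submatrix_apply, id, prod_mul_distrib]
  rw [sum_comm]
  exact sum_congr rfl fun f _ => sum_congr rfl fun σ _ => by ring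

/-- The Cauchy–Binet formula, summed over all maps `f` instead of over subsets of `k`. -/
theorem factorial_card_mul_det_mul (A : Matrix m k R) (B : Matrix k m R) :
    ((Fintype.card m).factorial : R) * (A * B).det =
      ∑ f : m → k, (A.submatrix id f).det * (B.submatrix f id).det := by
  have hσ (σ : Equiv.Perm m) : ∑ f : m → k,
      (Equiv.Perm.sign σ * ∏ i, B (f (σ i)) i) * (A.submatrix id f).det = (A * B).det := by
    rw [det_mul_eq_sum_prod_mul_det_submatrix]
    refine Fintype.sum_equiv (Equiv.arrowCongr σ.symm (Equiv.refl k)) _ _ fun f => ?_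
    change _ = (∏ i, B (f (σ i)) i) * ((A.submatrix id f).submatrix id σ).det
    rw [det_permute']
    ring
  simp only [det_apply' (B.submatrix _ id), submatrix_apply, id, mul_sum]
  rw [sum_comm]
  simp only [mul_comm (A.submatrix id _).det, hσ, sum_const, card_univ, Fintype.card_perm,
    nsmul_eq_mul]

end CauchyBinet

section Congruence

variable {V ι κ : Type*} [Fintype ι] [DecidableEq ι] [Fintype κ] [DecidableEq κ]

theorem det_transpose_mul_mul_self (P : Matrix ι κ R) (B : Matrix ι ι R) (e : ι ≃ κ) :
    (Pᵀ * B * P).det = (Pᵀ * P).det * B.det := by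
  have reindex (N : Matrix ι ι R) : Pᵀ * N * P =
      (P.submatrix e.symm id)ᵀ * N.submatrix e.symm e.symm * P.submatrix e.symm id := by
    rw [transpose_submatrix, submatrix_mul_equiv, submatrix_mul_equiv]; rfl
  rw [reindex B, ← Matrix.mul_one Pᵀ, reindex 1, submatrix_one_equiv, Matrix.mul_one, det_mul,
    det_mul, det_mul, det_submatrix_equiv_self]
  ring

theorem det_transpose_mul_mul_of_mul_transpose_mul_eq [Fintype V] (Q : Matrix V ι R)
    (M : Matrix V κ R) (A : Matrix V V R) (hQ : Qᵀ * Q = 1) (hM : Q * Qᵀ * M = M)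
    (e : ι ≃ κ) : (Mᵀ * A * M).det = (Mᵀ * M).det * (Qᵀ * A * Q).det := by
  have hMP : M = Q * (Qᵀ * M) := by rw [← Matrix.mul_assoc, hM]
  generalize Qᵀ * M = P at hMP
  subst hMP
  have hPP : (Q * P)ᵀ * (Q * P) = Pᵀ * P := by
    rw [transpose_mul, Matrix.mul_assoc, ← Matrix.mul_assoc Qᵀ, hQ, Matrix.one_mul]
  rw [hPP, ← det_transpose_mul_mul_self P _ e, transpose_mul]
  simp only [Matrix.mul_assoc]

end Congruence

end Matrix

section Counting

variable {ι E : Type*} [Fintype ι] [DecidableEq ι] [Fintype E] [DecidableEq E]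

theorem card_filter_injective_image_eq {S : Finset E} (hS : S.card = Fintype.card ι) :
    #{f ∈ univ.filter (Function.Injective (α := ι) (β := E)) | univ.image f = S} =
      (Fintype.card ι).factorial := by
  obtain ⟨e⟩ : Nonempty (ι ≃ S) := Fintype.card_eq.mp (by simp [hS])
  rw [← Fintype.card_equiv e, ← card_univ]
  symm
  refine card_bij (fun g _ => Subtype.val ∘ g) (fun g _ => ?_) (fun g _ g' _ h => ?_) fun f hf => ?_
  · refine mem_filter.mpr ⟨mem_filter.mpr ⟨mem_univ _, Subtype.val_injective.comp g.injective⟩, ?_⟩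
    ext x
    simp only [mem_image, mem_univ, true_and, Function.comp_apply]
    exact ⟨fun ⟨i, hi⟩ => hi ▸ (g i).2, fun hx => ⟨g.symm ⟨x, hx⟩, by simp⟩⟩
  · exact Equiv.ext fun i => Subtype.ext (congrFun h i)
  · obtain ⟨hf_inj, himage⟩ := mem_filter.mp hf
    have hinj := (mem_filter.mp hf_inj).2
    have hmem (i : ι) : f i ∈ S := himage ▸ mem_image_of_mem f (mem_univ i)
    refine ⟨Equiv.ofBijective (fun i => ⟨f i, hmem i⟩) ⟨fun i j h => hinj (congrArg Subtype.val h),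
      fun x => ?_⟩, mem_univ _, rfl⟩
    obtain ⟨i, -, hi⟩ := mem_image.mp (himage ▸ x.2 : (x : E) ∈ univ.image f)
    exact ⟨i, Subtype.ext hi⟩

theorem sum_ite_injective_eq_factorial_smul {M : Type*} [AddCommMonoid M] (h : Finset E → M) :
    ∑ f : ι → E, (if Function.Injective f then h (univ.image f) else 0) =
      (Fintype.card ι).factorial • ∑ S ∈ powersetCard (Fintype.card ι) univ, h S := by
  rw [← sum_filter, ← sum_fiberwise_of_maps_to (g := fun f => univ.image f)
    (t := powersetCard (Fintype.card ι) univ), smul_sum]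
  · refine sum_congr rfl fun S hS => ?_
    rw [sum_congr rfl fun f hf => by rw [(mem_filter.mp hf).2], sum_const,
      card_filter_injective_image_eq (mem_powersetCard_univ.mp hS)]
  · intro f hf
    rw [mem_powersetCard_univ, card_image_of_injective _ (mem_filter.mp hf).2, card_univ]

end Counting

theorem Fintype.card_subtype_ne_add_one {V : Type*} [Fintype V] [DecidableEq V] (r : V) :
    Fintype.card {v // v ≠ r} + 1 = Fintype.card V := by
  have := Fintype.card_pos_iff.mpr ⟨r⟩
  simp only [ne_eq, Fintype.card_subtype_compl, Fintype.card_unique]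
  omega

theorem sum_subtype_ne_eq_sum {V M : Type*} [Fintype V] [DecidableEq V] [AddCommMonoid M]
    {r : V} {g : V → M} (hg : g r = 0) : ∑ v : {v // v ≠ r}, g v = ∑ v, g v := by
  rw [← sum_subtype (univ.erase r) (by simp) g, sum_erase _ hg]

theorem Sym2.mk_out_eq {V : Type*} (e : Sym2 V) : s((Quot.out e).1, (Quot.out e).2) = e :=
  Quot.out_eq e

theorem SimpleGraph.Connected.exists_adj_dist_lt {V : Type*} {G : SimpleGraph V}
    (h : G.Connected) {u v : V} (hv : v ≠ u) : ∃ w, G.Adj v w ∧ G.dist u w < G.dist u v := by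
  obtain ⟨p, hp⟩ := h.exists_walk_length_eq_dist v u
  cases p with
  | nil => exact absurd rfl hv
  | cons hadj q =>
    refine ⟨_, hadj, ?_⟩
    rw [SimpleGraph.dist_comm, SimpleGraph.dist_comm (u := u), ← hp,
      SimpleGraph.Walk.length_cons]
    exact Nat.lt_succ_of_le (SimpleGraph.dist_le q)

section SpanningTrees

open SimpleGraph

variable {V : Type*} [Fintype V] [DecidableEq V]

theorem card_le_card_filter_not_isDiag_add_one {S : Finset (Sym2 V)}
    (h : (fromEdgeSet (S : Set (Sym2 V))).Connected) :
    Fintype.card V ≤ #{e ∈ S | ¬e.IsDiag} + 1 := by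
  have hset : (S : Set (Sym2 V)) \ Sym2.diagSet = ↑{e ∈ S | ¬e.IsDiag} := by
    ext e
    simp [Sym2.mem_diagSet]
  have := h.card_vert_le_card_edgeSet_add_one
  rwa [edgeSet_fromEdgeSet, hset, Nat.card_coe_set_eq, Set.ncard_coe_finset,
    Nat.card_eq_fintype_card] at this

theorem not_isDiag_of_connected_of_card_eq {S : Finset (Sym2 V)}
    (h : (fromEdgeSet (S : Set (Sym2 V))).Connected) (hS : S.card = Fintype.card V - 1) :
    ∀ e ∈ S, ¬e.IsDiag := by
  have := card_le_card_filter_not_isDiag_add_one h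
  exact filter_card_eq (le_antisymm (card_filter_le _ _) (by omega))

theorem injective_of_connected_fromEdgeSet_image {r : V} {f : {v // v ≠ r} → Sym2 V}
    (h : (fromEdgeSet (univ.image f : Set (Sym2 V))).Connected) : Function.Injective f := by
  have hle := card_le_card_filter_not_isDiag_add_one h
  have hcard := Fintype.card_subtype_ne_add_one r
  have hfilter := card_filter_le (univ.image f) (¬·.IsDiag)
  have himage : #(univ.image f) = #(univ : Finset {v // v ≠ r}) :=
    le_antisymm card_image_le (by rw [card_univ]; omega)
  simpa using card_image_iff.mp himage

end SpanningTrees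

section Incidence

/-- Each edge `e` is oriented by the arbitrary representative `Quot.out e`; only products of two
entries of the same column matter. Loops give zero columns. -/
noncomputable def signedIncidence (V : Type*) [DecidableEq V] : Matrix V (Sym2 V) ℝ :=
  of fun v e => (if v = (Quot.out e).1 then 1 else 0) - if v = (Quot.out e).2 then 1 else 0

variable {V : Type*} [DecidableEq V]

theorem sum_mul_signedIncidence [Fintype V] (g : V → ℝ) (e : Sym2 V) :
    ∑ v, g v * signedIncidence V v e = g (Quot.out e).1 - g (Quot.out e).2 := by
  simp [signedIncidence, mul_sub, sum_sub_distrib]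

theorem mem_of_signedIncidence_ne_zero {v : V} {e : Sym2 V} (h : signedIncidence V v e ≠ 0) :
    v ∈ e := by
  rw [← Sym2.mk_out_eq e, Sym2.mem_iff]
  by_contra! hv
  simp [signedIncidence, hv.1, hv.2] at h

theorem sq_signedIncidence_of_mem {v : V} {e : Sym2 V} (hv : v ∈ e) (he : ¬e.IsDiag) :
    signedIncidence V v e ^ 2 = 1 := by
  rw [← Sym2.mk_out_eq e, Sym2.mem_iff] at hv
  rw [← Sym2.mk_out_eq e, Sym2.mk_isDiag_iff] at he
  rcases hv with rfl | rfl <;> simp [signedIncidence, he, Ne.symm he]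

theorem signedIncidence_mul_signedIncidence_mk {x y : V} (hxy : x ≠ y) :
    signedIncidence V x s(x, y) * signedIncidence V y s(x, y) = -1 := by
  have hout := Sym2.mk_out_eq s(x, y)
  simp only [signedIncidence, of_apply]
  rcases Sym2.eq_iff.mp hout with ⟨h1, h2⟩ | ⟨h1, h2⟩ <;>
    simp [h1, h2, hxy, Ne.symm hxy]

theorem signedIncidence_mul_diagonal_mul_transpose [Fintype V] (C : V → V → ℝ)
    (hsym : ∀ x y, C x y = C y x) (lam : V → ℝ) (hlam : ∀ x, lam x = ∑ y, C x y) :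
    signedIncidence V * diagonal (Sym2.lift ⟨C, hsym⟩) * (signedIncidence V)ᵀ =
      diagonal lam - of C := by
  -- both sides have zero row sums, so only the off-diagonal entries need to be compared
  refine ext_of_mulVec_one_of_ne ?_ fun x y hxy => ?_
  · have hcol : (signedIncidence V)ᵀ *ᵥ 1 = 0 := by
      ext e
      rw [mulVec_transpose, vecMul, dotProduct, sum_mul_signedIncidence]
      simp
    rw [← mulVec_mulVec, hcol, mulVec_zero, sub_mulVec]
    ext x
    simp [mulVec, dotProduct, diagonal_apply, hlam]
  · rw [mul_apply, sum_eq_single s(x, y)]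
    · simp only [mul_diagonal, transpose_apply, Matrix.sub_apply, diagonal_apply_ne _ hxy]
      rw [mul_right_comm, signedIncidence_mul_signedIncidence_mk hxy]
      simp
    · intro e _ hne
      simp only [mul_diagonal, transpose_apply]
      by_contra h
      have hx := mem_of_signedIncidence_ne_zero (left_ne_zero_of_mul (left_ne_zero_of_mul h))
      have hy := mem_of_signedIncidence_ne_zero (right_ne_zero_of_mul h)
      exact hne (Sym2.eq_of_ne_mem hxy hx hy (Sym2.mem_mk_left x y) (Sym2.mem_mk_right x y))
    · simp

noncomputable def reducedIncidence (r : V) : Matrix {v // v ≠ r} (Sym2 V) ℝ :=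
  (signedIncidence V).submatrix (↑) id

@[simp]
theorem reducedIncidence_apply (r : V) (v : {v // v ≠ r}) (e : Sym2 V) :
    reducedIncidence r v e = signedIncidence V v e :=
  rfl

end Incidence

section MatrixTree

open SimpleGraph

variable {V : Type*} [Fintype V] [DecidableEq V]

theorem det_submatrix_reducedIncidence_eq_zero {r : V} {f : {v // v ≠ r} → Sym2 V}
    (h : ¬(fromEdgeSet (univ.image f : Set (Sym2 V))).Connected) :
    ((reducedIncidence r).submatrix id f).det = 0 := by
  set G := fromEdgeSet (univ.image f : Set (Sym2 V))
  obtain ⟨x, hx⟩ : ∃ x, ¬G.Reachable r x := by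
    by_contra! hall
    exact h ((connected_iff_exists_forall_reachable G).mpr ⟨r, hall⟩)
  -- the indicator of the component of `x` is a left null vector
  let g : V → ℝ := fun v => if G.Reachable x v then 1 else 0
  have hgr : g r = 0 := if_neg fun hxr => hx hxr.symm
  refine exists_vecMul_eq_zero_iff.mp ⟨fun v => g v, fun h0 => ?_, ?_⟩
  · have hxr : x ≠ r := fun hxr => hx (hxr ▸ Reachable.refl _)
    simpa [g] using congrFun h0 ⟨x, hxr⟩
  · ext j
    simp only [vecMul, dotProduct, submatrix_apply, reducedIncidence_apply, id_eq, Pi.zero_apply]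
    rw [sum_subtype_ne_eq_sum (g := fun v => g v * signedIncidence V v (f j)) (by simp [hgr]),
      sum_mul_signedIncidence, sub_eq_zero]
    set a := (Quot.out (f j)).1
    set b := (Quot.out (f j)).2
    rcases eq_or_ne a b with hab | hab
    · rw [hab]
    · have hadj : G.Adj a b := (fromEdgeSet_adj _).mpr ⟨by simp [a, b, Sym2.mk_out_eq], hab⟩
      exact if_congr ⟨fun h => h.trans hadj.reachable, fun h => h.trans hadj.symm.reachable⟩ rfl rfl

theorem sq_det_submatrix_reducedIncidence_of_connected {r : V} {f : {v // v ≠ r} → Sym2 V}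
    (h : (fromEdgeSet (univ.image f : Set (Sym2 V))).Connected) :
    ((reducedIncidence r).submatrix id f).det ^ 2 = 1 := by
  set G := fromEdgeSet (univ.image f : Set (Sym2 V))
  -- Each `v ≠ r` has a neighbour `p v` closer to `r`. The edges `s(v, p v)` are those of `f`
  -- permuted by `σ`, and their incidence matrix is triangular for the distance to `r`.
  choose p hadj hlt using fun v : {v // v ≠ r} => h.exists_adj_dist_lt v.2
  have hparent (v : {v // v ≠ r}) : ∃ i, f i = s(↑v, p v) := by
    simpa [G] using ((fromEdgeSet_adj _).mp (hadj v)).1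
  choose τ hτ using hparent
  have hτ_inj : Function.Injective τ := fun v w hvw => by
    have hvw' := hτ v
    rw [hvw, hτ w, Sym2.eq_iff] at hvw'
    rcases hvw' with ⟨h1, -⟩ | ⟨h1, h2⟩
    · exact Subtype.ext h1.symm
    · have hv := hlt v
      have hw := hlt w
      rw [← h1] at hv
      rw [h2] at hw
      exact absurd (hv.trans hw) (lt_irrefl _)
  let σ := Equiv.ofBijective τ (Finite.injective_iff_bijective.mp hτ_inj)
  have htri : ((reducedIncidence r).submatrix id (f ∘ σ)).det =
      ∏ v : {v // v ≠ r}, signedIncidence V v s(↑v, p v) := by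
    rw [det_eq_prod_diag_of_lt ((reducedIncidence r).submatrix id (f ∘ σ))
      (fun v => G.dist r v)]
    · simp [σ, hτ]
    intro u v huv hne
    simp only [submatrix_apply, Function.comp_apply, σ, Equiv.ofBijective_apply, hτ] at hne
    rcases Sym2.mem_iff.mp (mem_of_signedIncidence_ne_zero hne) with h1 | h1
    · exact absurd (Subtype.ext h1) huv
    · exact h1 ▸ hlt v
  have hdiag (v : {v // v ≠ r}) : signedIncidence V v s(↑v, p v) ^ 2 = 1 :=
    sq_signedIncidence_of_mem (Sym2.mem_mk_left _ _) (Sym2.mk_isDiag_iff.not.mpr (hadj v).ne)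
  have hperm := det_permute' σ ((reducedIncidence r).submatrix id f)
  rw [submatrix_submatrix, Function.comp_id, htri] at hperm
  have hsign : ((Equiv.Perm.sign σ : ℤ) : ℝ) ^ 2 = 1 := by
    rw [← Int.cast_pow, ← Units.val_pow_eq_pow_val, Int.units_sq, Units.val_one, Int.cast_one]
  calc ((reducedIncidence r).submatrix id f).det ^ 2
      = ((Equiv.Perm.sign σ : ℤ) : ℝ) ^ 2 * ((reducedIncidence r).submatrix id f).det ^ 2 := by
        rw [hsign, one_mul]
    _ = ∏ v : {v // v ≠ r}, signedIncidence V v s(↑v, p v) ^ 2 := by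
        rw [← mul_pow, ← hperm, prod_pow]
    _ = 1 := prod_eq_one fun v _ => hdiag v

theorem det_submatrix_reducedIncidence_mul (w : Sym2 V → ℝ) {r : V}
    (f : {v // v ≠ r} → Sym2 V) :
    ((reducedIncidence r).submatrix id f).det *
        ((diagonal w * (reducedIncidence r)ᵀ).submatrix f id).det =
      if Function.Injective f then
        (if (fromEdgeSet (univ.image f : Set (Sym2 V))).Connected then
          ∏ e ∈ univ.image f, w e else 0) else 0 := by
  have hB : (diagonal w * (reducedIncidence r)ᵀ).submatrix f id =
      diagonal (w ∘ f) * ((reducedIncidence r).submatrix id f)ᵀ := by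
    ext; simp [diagonal_mul]
  rw [hB, det_mul, det_diagonal, det_transpose]
  by_cases h : (fromEdgeSet (univ.image f : Set (Sym2 V))).Connected
  · have hinj := injective_of_connected_fromEdgeSet_image h
    rw [if_pos hinj, if_pos h, prod_image fun i _ j _ hij => hinj hij, mul_left_comm, ← sq,
      sq_det_submatrix_reducedIncidence_of_connected h, mul_one]
    rfl
  · rw [det_submatrix_reducedIncidence_eq_zero h, zero_mul]
    split_ifs <;> rfl

theorem det_submatrix_incidence_gram_eq_sum_spanningTrees (w : Sym2 V → ℝ) (r : V) :
    ((signedIncidence V * diagonal w * (signedIncidence V)ᵀ).submatrix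
        ((↑) : {v // v ≠ r} → V) (↑)).det =
      ∑ t ∈ univ.filter (fun t : Finset (Sym2 V) => (fromEdgeSet (t : Set (Sym2 V))).Connected ∧
        t.card = Fintype.card V - 1 ∧ ∀ e ∈ t, ¬e.IsDiag), ∏ e ∈ t, w e := by
  have hcard : Fintype.card {v // v ≠ r} = Fintype.card V - 1 := by
    have := Fintype.card_subtype_ne_add_one r
    omega
  have hfilter : univ.filter (fun t : Finset (Sym2 V) =>
      (fromEdgeSet (t : Set (Sym2 V))).Connected ∧ t.card = Fintype.card V - 1 ∧
        ∀ e ∈ t, ¬e.IsDiag) =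
      (powersetCard (Fintype.card {v // v ≠ r}) univ).filter
        (fun t : Finset (Sym2 V) => (fromEdgeSet (t : Set (Sym2 V))).Connected) := by
    ext t
    simp only [mem_filter, mem_univ, true_and, mem_powersetCard_univ, hcard]
    exact ⟨fun ⟨hc, ht, _⟩ => ⟨ht, hc⟩,
      fun ⟨ht, hc⟩ => ⟨hc, ht, not_isDiag_of_connected_of_card_eq hc ht⟩⟩
  have hgram : (signedIncidence V * diagonal w * (signedIncidence V)ᵀ).submatrix
      ((↑) : {v // v ≠ r} → V) (↑) =
        reducedIncidence r * (diagonal w * (reducedIncidence r)ᵀ) := by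
    ext
    simp [reducedIncidence, mul_apply, Matrix.mul_assoc]
  refine mul_left_cancel₀
    (Nat.cast_ne_zero.mpr (Nat.factorial_ne_zero (Fintype.card {v // v ≠ r}))) ?_
  rw [hgram, factorial_card_mul_det_mul]
  simp only [det_submatrix_reducedIncidence_mul]
  rw [sum_ite_injective_eq_factorial_smul (fun S : Finset (Sym2 V) =>
    if (fromEdgeSet (S : Set (Sym2 V))).Connected then ∏ e ∈ S, w e else 0),
    nsmul_eq_mul, hfilter, sum_filter]

end MatrixTree

section Green

variable {V : Type*} [Fintype V] [DecidableEq V]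

/-- The measures `δ_x - δ_r`, `x ≠ r`, as columns: a basis of the zero-mass hyperplane. -/
noncomputable def rootedDifferences (r : V) : Matrix V {v // v ≠ r} ℝ :=
  of fun v x => (if v = x then 1 else 0) - if v = r then 1 else 0

theorem sum_rootedDifferences (r : V) (x : {v // v ≠ r}) : ∑ v, rootedDifferences r v x = 0 := by
  simp [rootedDifferences, sum_sub_distrib]

theorem det_transpose_mul_rootedDifferences (r : V) :
    ((rootedDifferences r)ᵀ * rootedDifferences r).det = Fintype.card V := by
  have hgram : (rootedDifferences r)ᵀ * rootedDifferences r =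
      1 + replicateCol Unit (fun _ : {v // v ≠ r} => (1 : ℝ)) *
        replicateRow Unit (fun _ : {v // v ≠ r} => (1 : ℝ)) := by
    ext x y
    have hx : (x : V) ≠ r := x.2
    have hy : (y : V) ≠ r := y.2
    simp [rootedDifferences, mul_apply, mul_sub, sum_sub_distrib, one_apply, hx.symm, hy.symm,
      Subtype.ext_iff, eq_comm]
  rw [hgram, det_one_add_replicateCol_mul_replicateRow, ← Fintype.card_subtype_ne_add_one r]
  simp [dotProduct, add_comm]

theorem submatrix_mul_transpose_rootedDifferences {L : Matrix V V ℝ} (hL : L *ᵥ 1 = 0)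
    (r : V) : L.submatrix ((↑) : {v // v ≠ r} → V) ((↑) : {v // v ≠ r} → V) *
      (rootedDifferences r)ᵀ = L.submatrix (↑) id := by
  ext y v
  have hrow : ∑ z, L y z = 0 := by simpa [mulVec, dotProduct] using congrFun hL y
  simp only [mul_apply, submatrix_apply, transpose_apply, rootedDifferences, of_apply, id_eq]
  rw [sum_subtype_ne_eq_sum
    (g := fun z => L y z * ((if v = z then 1 else 0) - if v = r then 1 else 0)) (by simp)]
  simp [mul_sub, sum_sub_distrib, hrow]

theorem submatrix_mul_rootedDifferences_gram_eq_one {L G : Matrix V V ℝ} (hL : L *ᵥ 1 = 0)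
    (hG : ∀ μ : V → ℝ, ∑ x, μ x = 0 → L *ᵥ (G *ᵥ μ) = μ) (r : V) :
    L.submatrix ((↑) : {v // v ≠ r} → V) ((↑) : {v // v ≠ r} → V) *
      ((rootedDifferences r)ᵀ * G * rootedDifferences r) = 1 := by
  have hLGM : L * G * rootedDifferences r = rootedDifferences r := by
    ext v x
    have hcol := hG (fun v => rootedDifferences r v x) (sum_rootedDifferences r x)
    rw [mulVec_mulVec] at hcol
    exact congrFun hcol v
  rw [← Matrix.mul_assoc, ← Matrix.mul_assoc, submatrix_mul_transpose_rootedDifferences hL]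
  change (L * G * rootedDifferences r).submatrix Subtype.val id = 1
  rw [hLGM]
  ext x y
  simp [rootedDifferences, one_apply, x.2, Subtype.ext_iff]

end Green

section OrthonormalColumns

variable {V ι : Type*} [Fintype V] [Fintype ι] {H : Submodule ℝ (EuclideanSpace ℝ V)}

noncomputable def OrthonormalBasis.toColumnMatrix (b : OrthonormalBasis ι ℝ H) :
    Matrix V ι ℝ :=
  of fun v i => (b i : EuclideanSpace ℝ V) v

theorem OrthonormalBasis.transpose_toColumnMatrix_mul_self [DecidableEq ι]
    (b : OrthonormalBasis ι ℝ H) : b.toColumnMatrixᵀ * b.toColumnMatrix = 1 := by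
  ext i j
  have h := orthonormal_iff_ite.mp b.orthonormal i j
  rw [Submodule.coe_inner, PiLp.inner_apply] at h
  simpa [toColumnMatrix, mul_apply, one_apply, mul_comm] using h

theorem OrthonormalBasis.toColumnMatrix_mul_transpose_mul_of_mem {κ : Type*} [Fintype κ]
    (b : OrthonormalBasis ι ℝ H) (M : Matrix V κ ℝ)
    (hM : ∀ k, WithLp.toLp 2 (fun v => M v k) ∈ H) :
    b.toColumnMatrix * b.toColumnMatrixᵀ * M = M := by
  ext v k
  have h := congrArg (fun x : H => (x : EuclideanSpace ℝ V) v) (b.sum_repr' ⟨_, hM k⟩)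
  simp only [Submodule.coe_inner, PiLp.inner_apply, RCLike.inner_apply, Real.ringHom_apply,
    AddSubmonoidClass.coe_finsetSum, SetLike.val_smul, WithLp.ofLp_sum, WithLp.ofLp_smul,
    Finset.sum_apply, Pi.smul_apply, smul_eq_mul] at h
  simp only [toColumnMatrix, mul_apply, transpose_apply, of_apply]
  rw [← h]
  simp only [sum_mul]
  rw [sum_comm]
  exact sum_congr rfl fun _ _ => sum_congr rfl fun _ _ => by ring

theorem OrthonormalBasis.transpose_toColumnMatrix_mul_mul (b : OrthonormalBasis ι ℝ H)
    (G : Matrix V V ℝ) :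
    b.toColumnMatrixᵀ * G * b.toColumnMatrix = of fun i j => ⟪(b i : EuclideanSpace ℝ V),
      (WithLp.equiv 2 (V → ℝ)).symm (G.mulVec (b j : EuclideanSpace ℝ V))⟫ := by
  ext i j
  simp only [toColumnMatrix, mul_apply, transpose_apply, of_apply, WithLp.equiv_symm_apply,
    PiLp.inner_apply, mulVec, dotProduct, RCLike.inner_apply, Real.ringHom_apply]
  simp only [sum_mul]
  rw [sum_comm]
  exact sum_congr rfl fun _ _ => sum_congr rfl fun _ _ => by ring

end OrthonormalColumns

theorem matrix_tree_recurrent_general (n : ℕ) (hn : 0 < n)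
    (C : Fin n → Fin n → ℝ)
    (hsym : ∀ x y, C x y = C y x)
    (lam : Fin n → ℝ) (hlam : ∀ x, lam x = ∑ y, C x y)
    (Gmat : Matrix (Fin n) (Fin n) ℝ)
    (hG : ∀ μ : Fin n → ℝ, ∑ x, μ x = 0 →
      (Matrix.diagonal lam - Matrix.of C).mulVec (Gmat.mulVec μ) = μ)
    (H : Submodule ℝ (EuclideanSpace ℝ (Fin n)))
    (hH : ∀ v : EuclideanSpace ℝ (Fin n), v ∈ H ↔ ∑ x, v x = 0)
    (b : OrthonormalBasis (Fin (n - 1)) ℝ ↥H) :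
    (∑ t ∈ Finset.univ.filter
        (fun t : Finset (Sym2 (Fin n)) =>
          (SimpleGraph.fromEdgeSet (↑t : Set (Sym2 (Fin n)))).Connected ∧ t.card = n - 1 ∧ ∀ e ∈ t, ¬e.IsDiag),
        ∏ e ∈ t, Sym2.lift ⟨C, hsym⟩ e)⁻¹
      = (n : ℝ) * (Matrix.of fun i j : Fin (n - 1) =>
          ⟪((b i : ↥H) : EuclideanSpace ℝ (Fin n)),
            ((WithLp.equiv 2 (Fin n → ℝ)).symm
              (Gmat.mulVec ((b j : ↥H) : EuclideanSpace ℝ (Fin n))))⟫).det := by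
  let r : Fin n := ⟨0, hn⟩
  have hL : (diagonal lam - of C) *ᵥ 1 = 0 := by
    ext x
    simp [mulVec, dotProduct, diagonal_apply, hlam]
  have htree := det_submatrix_incidence_gram_eq_sum_spanningTrees (Sym2.lift ⟨C, hsym⟩) r
  rw [signedIncidence_mul_diagonal_mul_transpose C hsym lam hlam, Fintype.card_fin] at htree
  have hM : b.toColumnMatrix * b.toColumnMatrixᵀ * rootedDifferences r = rootedDifferences r :=
    b.toColumnMatrix_mul_transpose_mul_of_mem _ fun x => (hH _).mpr (sum_rootedDifferences r x)
  have hcard : (n : ℝ) = ((rootedDifferences r)ᵀ * rootedDifferences r).det := by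
    rw [det_transpose_mul_rootedDifferences, Fintype.card_fin]
  rw [← htree, ← b.transpose_toColumnMatrix_mul_mul, hcard,
    ← det_transpose_mul_mul_of_mul_transpose_mul_eq _ _ _ b.transpose_toColumnMatrix_mul_self hM
      (Fintype.equivOfCardEq (by simp))]
  exact inv_eq_of_mul_eq_one_right (by
    rw [← det_mul, submatrix_mul_rootedDifferences_gram_eq_one hL hG r, det_one])

/-- Matrix-tree normalization for a recurrent connected weighted graph: the inverse of the sum
over spanning trees of the products of their conductances equals `|X| · det(G)`, where
`det(G)` is the determinant of the recurrent Green operator (a bilinear form on the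
hyperplane of zero-mass measures), computed in any orthonormal basis of that hyperplane. -/
theorem matrix_tree_recurrent (n : ℕ) (hn : 0 < n)
    (C : Fin n → Fin n → ℝ)
    (hsym : ∀ x y, C x y = C y x) (hnn : ∀ x y, 0 ≤ C x y) (hdiag : ∀ x, C x x = 0)
    (hconn : ∀ f : Fin n → ℝ, (∀ x y, C x y ≠ 0 → f x = f y) → ∀ x y, f x = f y)
    (lam : Fin n → ℝ) (hlam : ∀ x, lam x = ∑ y, C x y)
    (Gmat : Matrix (Fin n) (Fin n) ℝ)
    (hG : ∀ μ : Fin n → ℝ, ∑ x, μ x = 0 →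
      (Matrix.diagonal lam - Matrix.of C).mulVec (Gmat.mulVec μ) = μ)
    (H : Submodule ℝ (EuclideanSpace ℝ (Fin n)))
    (hH : ∀ v : EuclideanSpace ℝ (Fin n), v ∈ H ↔ ∑ x, v x = 0)
    (b : OrthonormalBasis (Fin (n - 1)) ℝ ↥H) :
    (∑ t ∈ Finset.univ.filter
        (fun t : Finset (Sym2 (Fin n)) =>
          (SimpleGraph.fromEdgeSet (↑t : Set (Sym2 (Fin n)))).Connected ∧ t.card = n - 1 ∧ ∀ e ∈ t, ¬e.IsDiag),
        ∏ e ∈ t, Sym2.lift ⟨C, hsym⟩ e)⁻¹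
      = (n : ℝ) * (Matrix.of fun i j : Fin (n - 1) =>
          ⟪((b i : ↥H) : EuclideanSpace ℝ (Fin n)),
            ((WithLp.equiv 2 (Fin n → ℝ)).symm
              (Gmat.mulVec ((b j : ↥H) : EuclideanSpace ℝ (Fin n))))⟫).det :=
  matrix_tree_recurrent_general n hn C hsym lam hlam Gmat hG H hH b
end

section
/- Trace of a Markov chain: let e be the Dirichlet form of a transient symmetric chain on finite X = D ⊔ F, and define the trace form e^{{F}}(f) = e(H^F f) where H^F is the hitting kernel of F. Then the conductances and killing of e^{{F}} are C^{{F}}_{x,y} = C_{x,y} + Σ_{a,b∈D} C_{x,a} C_{b,y} [G^D]^{a,b} for x≠y in F, and λ^{{F}}_x = λ_x − Σ_{a,b∈D} C_{x,a}C_{b,x}[G^D]^{a,b}; moreover the Green function of e^{{F}} is the restriction of G to F×F and det(G) = det(G^D)·det(G|_{F×F}). -/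
open Matrix

/-!
Write `M = diagonal λ - C` in blocks over `D ⊔ F` with `A = M|_{D×D}`. The harmonic extension
`H g = (-A⁻¹ M_{DF} g, g)` satisfies `M (H g) = (0, S g)`, where `S` is the Schur complement of `A`;
hence the trace form `⟨H f, M H g⟩` is the form `⟨f, S g⟩`, whose matrix is read off as
`diagonal λ_F - C^F`. The block equations of `M M⁻¹ = 1` show `S (M⁻¹)_{FF} = 1`, and
`det M = det A · det S` then gives the determinant identity.
-/

noncomputable section

namespace Matrix

variable {m n R : Type*}

section CommRing

variable [CommRing R] [DecidableEq m]

def schurComplement₁₁ [Fintype m] (M : Matrix (m ⊕ n) (m ⊕ n) R) : Matrix n n R :=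
  M.toBlocks₂₂ - M.toBlocks₂₁ * M.toBlocks₁₁⁻¹ * M.toBlocks₁₂

def harmonicExtension [Fintype m] [Fintype n] (M : Matrix (m ⊕ n) (m ⊕ n) R) (g : n → R) :
    m ⊕ n → R :=
  Sum.elim (-(M.toBlocks₁₁⁻¹ * M.toBlocks₁₂) *ᵥ g) g

section Fintype

variable [Fintype m] [Fintype n]

theorem mulVec_harmonicExtension {M : Matrix (m ⊕ n) (m ⊕ n) R} (hA : IsUnit M.toBlocks₁₁.det)
    (g : n → R) : M *ᵥ harmonicExtension M g = Sum.elim (0 : m → R) (M.schurComplement₁₁ *ᵥ g) := by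
  rw [harmonicExtension, schurComplement₁₁]
  nth_rw 1 [← fromBlocks_toBlocks M]
  rw [fromBlocks_mulVec, Sum.elim_comp_inl, Sum.elim_comp_inr, mulVec_mulVec, mulVec_mulVec,
    Matrix.mul_neg, Matrix.mul_neg, mul_nonsing_inv_cancel_left _ _ hA, neg_mulVec, neg_mulVec,
    neg_add_cancel, sub_mulVec, ← Matrix.mul_assoc, neg_add_eq_sub]

theorem harmonicExtension_dotProduct_mulVec {M : Matrix (m ⊕ n) (m ⊕ n) R}
    (hA : IsUnit M.toBlocks₁₁.det) (f g : n → R) :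
    harmonicExtension M f ⬝ᵥ M *ᵥ harmonicExtension M g = f ⬝ᵥ M.schurComplement₁₁ *ᵥ g := by
  rw [mulVec_harmonicExtension hA, harmonicExtension, sumElim_dotProduct_sumElim, dotProduct_zero,
    zero_add]

theorem schurComplement₁₁_mul_toBlocks₂₂ [DecidableEq n] {M N : Matrix (m ⊕ n) (m ⊕ n) R}
    (hA : IsUnit M.toBlocks₁₁.det) (hMN : M * N = 1) :
    M.schurComplement₁₁ * N.toBlocks₂₂ = 1 := by
  rw [← fromBlocks_toBlocks M, ← fromBlocks_toBlocks N, fromBlocks_multiply, ← fromBlocks_one,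
    fromBlocks_inj] at hMN
  obtain ⟨-, h₁₂, -, h₂₂⟩ := hMN
  have hN₁₂ : M.toBlocks₁₁⁻¹ * (M.toBlocks₁₂ * N.toBlocks₂₂) = -N.toBlocks₁₂ := by
    rw [eq_neg_of_add_eq_zero_right h₁₂, Matrix.mul_neg, nonsing_inv_mul_cancel_left _ _ hA]
  rw [schurComplement₁₁, Matrix.sub_mul, Matrix.mul_assoc, Matrix.mul_assoc, hN₁₂, Matrix.mul_neg,
    sub_neg_eq_add, add_comm, h₂₂]

end Fintype

variable [DecidableEq n]

theorem dotProduct_diagonal_sub_of_mulVec [Fintype n] (d : n → R) (K : n → n → R) (f g : n → R) :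
    f ⬝ᵥ (diagonal d - of K) *ᵥ g
      = ∑ u, d u * f u * g u - ∑ u, ∑ v, K u v * f u * g v := by
  rw [sub_mulVec, dotProduct_sub]
  congr 1
  · exact Finset.sum_congr rfl fun u _ => by rw [mulVec_diagonal]; ring
  · simp only [dotProduct, mulVec, of_apply, Finset.mul_sum]
    exact Finset.sum_congr rfl fun u _ => Finset.sum_congr rfl fun v _ => by ring

theorem toBlocks₁₂_diagonal_sub (d : m ⊕ n → R) (K : Matrix (m ⊕ n) (m ⊕ n) R) :
    (diagonal d - K).toBlocks₁₂ = -K.toBlocks₁₂ := by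
  ext; simp [toBlocks₁₂, diagonal]

theorem toBlocks₂₁_diagonal_sub (d : m ⊕ n → R) (K : Matrix (m ⊕ n) (m ⊕ n) R) :
    (diagonal d - K).toBlocks₂₁ = -K.toBlocks₂₁ := by
  ext; simp [toBlocks₂₁, diagonal]

theorem toBlocks₂₂_diagonal_sub (d : m ⊕ n → R) (K : Matrix (m ⊕ n) (m ⊕ n) R) :
    (diagonal d - K).toBlocks₂₂ = diagonal (fun u => d (Sum.inr u)) - K.toBlocks₂₂ := by
  ext; simp [toBlocks₂₂, diagonal]

variable [Fintype m]

theorem harmonicExtension_diagonal_sub [Fintype n] (d : m ⊕ n → R)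
    (K : Matrix (m ⊕ n) (m ⊕ n) R) (g : n → R) :
    harmonicExtension (diagonal d - K) g
      = Sum.elim ((diagonal d - K).toBlocks₁₁⁻¹ *ᵥ (K.toBlocks₁₂ *ᵥ g)) g := by
  rw [harmonicExtension, toBlocks₁₂_diagonal_sub, Matrix.mul_neg, neg_neg, mulVec_mulVec]

theorem schurComplement₁₁_diagonal_sub (d : m ⊕ n → R) (K : Matrix (m ⊕ n) (m ⊕ n) R) :
    (diagonal d - K).schurComplement₁₁ = diagonal (fun u => d (Sum.inr u)) -
      (K.toBlocks₂₂ + K.toBlocks₂₁ * (diagonal d - K).toBlocks₁₁⁻¹ * K.toBlocks₁₂) := by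
  rw [schurComplement₁₁, toBlocks₁₂_diagonal_sub, toBlocks₂₁_diagonal_sub, toBlocks₂₂_diagonal_sub,
    Matrix.neg_mul, Matrix.neg_mul, Matrix.mul_neg, neg_neg, sub_sub]

end CommRing

theorem det_inv_eq_det_toBlocks₁₁_inv_mul_det_toBlocks₂₂ {K : Type*} [Field K] [Fintype m]
    [Fintype n] [DecidableEq m] [DecidableEq n] {M : Matrix (m ⊕ n) (m ⊕ n) K}
    (hM : IsUnit M.det) (hA : IsUnit M.toBlocks₁₁.det) :
    M⁻¹.det = M.toBlocks₁₁⁻¹.det * M⁻¹.toBlocks₂₂.det := by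
  let := invertibleOfIsUnitDet _ hA
  have hdetM : M.det = M.toBlocks₁₁.det * M.schurComplement₁₁.det := by
    conv_lhs => rw [← fromBlocks_toBlocks M]
    rw [det_fromBlocks₁₁, invOf_eq_nonsing_inv, schurComplement₁₁]
  have hS : M.schurComplement₁₁.det * M⁻¹.toBlocks₂₂.det = 1 := by
    rw [← det_mul, schurComplement₁₁_mul_toBlocks₂₂ hA (mul_nonsing_inv _ hM), det_one]
  rw [det_nonsing_inv, det_nonsing_inv, Ring.inverse_eq_inv', hdetM, mul_inv,
    inv_eq_of_mul_eq_one_right hS]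

end Matrix

end

theorem trace_markov_chain_general (α β : Type*) [Fintype α] [Fintype β]
    [DecidableEq α] [DecidableEq β]
    (C : α ⊕ β → α ⊕ β → ℝ)
    (hdiag : ∀ i, C i i = 0)
    (lam : α ⊕ β → ℝ)
    (hPD : (Matrix.diagonal lam - Matrix.of C).PosDef) :
    let M := Matrix.diagonal lam - Matrix.of C
    let GD := (M.toBlocks₁₁)⁻¹
    -- the harmonic extension `H^F f`
    let Hmap : (β → ℝ) → (α ⊕ β → ℝ) := fun f =>
      Sum.elim (fun a => ∑ b : α, GD a b * ∑ z : β, C (Sum.inl b) (Sum.inr z) * f z) f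
    -- the trace conductances (including the diagonal correction)
    let CF : β → β → ℝ := fun u v =>
      C (Sum.inr u) (Sum.inr v) +
        ∑ a : α, ∑ b : α, C (Sum.inr u) (Sum.inl a) * GD a b * C (Sum.inl b) (Sum.inr v)
    -- (1) the trace form is given by `λ` and the conductances `CF`
    (∀ f g : β → ℝ,
        dotProduct (Hmap f) (M.mulVec (Hmap g))
          = ∑ u : β, lam (Sum.inr u) * f u * g u - ∑ u : β, ∑ v : β, CF u v * f u * g v)
      -- (2) the trace killing normalization `λ^{F}`
      ∧ (∀ u : β,
          dotProduct (Hmap fun z => if z = u then (1 : ℝ) else 0)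
              (M.mulVec (Hmap fun z => if z = u then (1 : ℝ) else 0))
            = lam (Sum.inr u) -
                ∑ a : α, ∑ b : α,
                  C (Sum.inr u) (Sum.inl a) * GD a b * C (Sum.inl b) (Sum.inr u))
      -- (3) the Green function of the trace form is the restriction of `G` to `F × F`
      ∧ (Matrix.diagonal (fun u : β => lam (Sum.inr u)) - Matrix.of CF) * (M⁻¹).toBlocks₂₂ = 1
      -- (4) the determinant decomposition `det(G) = det(G^D) det(G|_{F×F})`
      ∧ (M⁻¹).det = ((M.toBlocks₁₁)⁻¹).det * ((M⁻¹).toBlocks₂₂).det := by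
  intro M GD Hmap CF
  have hM : IsUnit M.det := hPD.isUnit.map detMonoidHom
  have hA : IsUnit M.toBlocks₁₁.det := (hPD.submatrix Sum.inl_injective).isUnit.map detMonoidHom
  have hHmap : ∀ f, Hmap f = harmonicExtension M f := fun f => by
    rw [harmonicExtension_diagonal_sub]
    rfl
  have hS : M.schurComplement₁₁ = diagonal (fun u => lam (Sum.inr u)) - of CF := by
    rw [schurComplement₁₁_diagonal_sub]
    congr 1
    ext u v
    simp only [CF, of_apply, Matrix.add_apply, mul_apply, toBlocks₁₂, toBlocks₂₁, toBlocks₂₂,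
      Finset.sum_mul]
    rw [Finset.sum_comm]
  have hform : ∀ f g : β → ℝ, Hmap f ⬝ᵥ M *ᵥ Hmap g
      = ∑ u, lam (Sum.inr u) * f u * g u - ∑ u, ∑ v, CF u v * f u * g v := fun f g => by
    rw [hHmap, hHmap, harmonicExtension_dotProduct_mulVec hA, hS, dotProduct_diagonal_sub_of_mulVec]
  refine ⟨hform, fun u => ?_, hS ▸ schurComplement₁₁_mul_toBlocks₂₂ hA (mul_nonsing_inv M hM),
    det_inv_eq_det_toBlocks₁₁_inv_mul_det_toBlocks₂₂ hM hA⟩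
  rw [hform]
  simp [CF, hdiag]

/-- Trace of a Markov chain on `F = β` (with `D = α`): the trace Dirichlet form
`e^{{F}}(f,g) = e(H^F f, H^F g)` has conductances
`C^{F}_{x,y} = C_{x,y} + Σ_{a,b∈D} C_{x,a} [G^D]^{a,b} C_{b,y}` and killing normalization
`λ^{F}_x = λ_x - Σ_{a,b∈D} C_{x,a} [G^D]^{a,b} C_{b,x}`; its Green function is the
restriction of `G` to `F × F`, and `det(G) = det(G^D) · det(G|_{F×F})`. -/
theorem trace_markov_chain (α β : Type*) [Fintype α] [Fintype β]
    [DecidableEq α] [DecidableEq β]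
    (C : α ⊕ β → α ⊕ β → ℝ)
    (hsym : ∀ i j, C i j = C j i) (hnn : ∀ i j, 0 ≤ C i j) (hdiag : ∀ i, C i i = 0)
    (κ : α ⊕ β → ℝ) (hκ : ∀ i, 0 ≤ κ i)
    (lam : α ⊕ β → ℝ) (hlam : ∀ i, lam i = κ i + ∑ j, C i j)
    (hPD : (Matrix.diagonal lam - Matrix.of C).PosDef) :
    let M := Matrix.diagonal lam - Matrix.of C
    let GD := (M.toBlocks₁₁)⁻¹
    -- the harmonic extension `H^F f`
    let Hmap : (β → ℝ) → (α ⊕ β → ℝ) := fun f =>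
      Sum.elim (fun a => ∑ b : α, GD a b * ∑ z : β, C (Sum.inl b) (Sum.inr z) * f z) f
    -- the trace conductances (including the diagonal correction)
    let CF : β → β → ℝ := fun u v =>
      C (Sum.inr u) (Sum.inr v) +
        ∑ a : α, ∑ b : α, C (Sum.inr u) (Sum.inl a) * GD a b * C (Sum.inl b) (Sum.inr v)
    -- (1) the trace form is given by `λ` and the conductances `CF`
    (∀ f g : β → ℝ,
        dotProduct (Hmap f) (M.mulVec (Hmap g))
          = ∑ u : β, lam (Sum.inr u) * f u * g u - ∑ u : β, ∑ v : β, CF u v * f u * g v)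
      -- (2) the trace killing normalization `λ^{F}`
      ∧ (∀ u : β,
          dotProduct (Hmap fun z => if z = u then (1 : ℝ) else 0)
              (M.mulVec (Hmap fun z => if z = u then (1 : ℝ) else 0))
            = lam (Sum.inr u) -
                ∑ a : α, ∑ b : α,
                  C (Sum.inr u) (Sum.inl a) * GD a b * C (Sum.inl b) (Sum.inr u))
      -- (3) the Green function of the trace form is the restriction of `G` to `F × F`
      ∧ (Matrix.diagonal (fun u : β => lam (Sum.inr u)) - Matrix.of CF) * (M⁻¹).toBlocks₂₂ = 1
      -- (4) the determinant decomposition `det(G) = det(G^D) det(G|_{F×F})`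
      ∧ (M⁻¹).det = ((M.toBlocks₁₁)⁻¹).det * ((M⁻¹).toBlocks₂₂).det :=
  trace_markov_chain_general α β C hdiag lam hPD
end
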